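/- Let S be a continuous finitely generated free semigroup action on a compact metric space X. For each ε > 0, the function x ↦ h_d(x, ε) := inf{ B_d(K, S, ε) : K a compact neighborhood of x } is upper semicontinuous on X, and consequently the entropy function h_top(x) = lim_{ε→0⁺} h_d(x, ε) is Borel measurable. -/

import Mathlib

open Set Filter Topology

noncomputable section

variable {X Y : Type*} [MetricSpace X] [MetricSpace Y]

/-- The Bowen/dynamical metric along a word, given as the list of maps to be applied
(in order of application). -/
def dynDist : List (X → X) → X → X → ℝ
  | [], x, y => dist x y
  | f :: w, x, y => max (dist x y) (dynDist w (f x) (f y))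

/-- A set `E` is `(w, ε)`-separated if distinct points of `E` are at `dynDist w`-distance `> ε`. -/
def IsDynSeparated (w : List (X → X)) (ε : ℝ) (E : Set X) : Prop :=
  E.Pairwise fun x y => ε < dynDist w x y

/-- A set `F` is `(w, ε)`-spanning for `K` if every point of `K` is at
`dynDist w`-distance `< ε` of a point of `F`. -/
def IsDynSpanning (w : List (X → X)) (ε : ℝ) (K F : Set X) : Prop :=
  ∀ x ∈ K, ∃ y ∈ F, dynDist w x y < ε

/-- `s(K, w, ε)`: maximal cardinality of a `(w, ε)`-separated subset of `K`. -/
def sepCard (K : Set X) (w : List (X → X)) (ε : ℝ) : ℕ :=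
  sSup {n | ∃ E : Finset X, ↑E ⊆ K ∧ IsDynSeparated w ε (↑E : Set X) ∧ E.card = n}

/-- `b(K, w, ε)`: minimal cardinality of a `(w, ε)`-spanning subset of `K`. -/
def spanCard (K : Set X) (w : List (X → X)) (ε : ℝ) : ℕ :=
  sInf {n | ∃ F : Finset X, ↑F ⊆ K ∧ IsDynSpanning w ε K (↑F : Set X) ∧ F.card = n}

variable {p : ℕ}

/-- `S_n(K, 𝕊, ε)`: averaged count of maximal separated sets over all words of length `n`. -/
def SepSum (g : Fin p → X → X) (K : Set X) (n : ℕ) (ε : ℝ) : ℝ :=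
  (1 / (p : ℝ) ^ n) * ∑ u : Fin n → Fin p, (sepCard K ((List.ofFn u).map g) ε : ℝ)

/-- Averaged count of minimal spanning sets over all words of length `n`. -/
def SpanSum (g : Fin p → X → X) (K : Set X) (n : ℕ) (ε : ℝ) : ℝ :=
  (1 / (p : ℝ) ^ n) * ∑ u : Fin n → Fin p, (spanCard K ((List.ofFn u).map g) ε : ℝ)

/-- `S_d(K, 𝕊, ε)`: exponential growth rate of `SepSum`. -/
def SepRate (g : Fin p → X → X) (K : Set X) (ε : ℝ) : EReal :=
  Filter.limsup (fun n : ℕ => ((Real.log (SepSum g K n ε) / n : ℝ) : EReal)) Filter.atTop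

/-- `B_d(K, 𝕊, ε)`: exponential growth rate of `SpanSum`. -/
def SpanRate (g : Fin p → X → X) (K : Set X) (ε : ℝ) : EReal :=
  Filter.limsup (fun n : ℕ => ((Real.log (SpanSum g K n ε) / n : ℝ) : EReal)) Filter.atTop

/-- Bufetov topological entropy `h_top(K, 𝕊)` of the free semigroup action generated by `g`
restricted to `K`: the limit (= supremum, by monotonicity) of `SepRate` as `ε → 0⁺`. -/
def semigroupEntropy (g : Fin p → X → X) (K : Set X) : EReal :=
  ⨆ ε : {ε : ℝ // 0 < ε}, SepRate g K (ε : ℝ)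

/-- `x` is an entropy point: every closed neighbourhood has positive entropy. -/
def IsEntropyPoint (g : Fin p → X → X) (x : X) : Prop :=
  ∀ K : Set X, K ∈ nhds x → IsClosed K → 0 < semigroupEntropy g K

/-- `x` is a full entropy point: every closed neighbourhood carries full entropy. -/
def IsFullEntropyPoint (g : Fin p → X → X) (x : X) : Prop :=
  ∀ K : Set X, K ∈ nhds x → IsClosed K → semigroupEntropy g K = semigroupEntropy g Set.univ

/-- Bowen entropy growth rate of a single map `F` on `C` at scale `ε`. -/
def mapSepRate (F : Y → Y) (C : Set Y) (ε : ℝ) : EReal :=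
  Filter.limsup
    (fun n : ℕ => ((Real.log (sepCard C (List.replicate n F) ε) / n : ℝ) : EReal)) Filter.atTop

/-- Classical Bowen topological entropy of a single map `F` on a subset `C`. -/
def mapEntropy (F : Y → Y) (C : Set Y) : EReal :=
  ⨆ ε : {ε : ℝ // 0 < ε}, mapSepRate F C (ε : ℝ)

/-- Spanning growth rate of a single map. -/
def mapSpanRate (F : Y → Y) (C : Set Y) (ε : ℝ) : EReal :=
  Filter.limsup
    (fun n : ℕ => ((Real.log (spanCard C (List.replicate n F) ε) / n : ℝ) : EReal)) Filter.atTop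

/-- `h_d(x, ε)` for the semigroup action: infimum of `SpanRate` over compact neighbourhoods. -/
def hdEps (g : Fin p → X → X) (x : X) (ε : ℝ) : EReal :=
  ⨅ K : {K : Set X // K ∈ nhds x ∧ IsCompact K}, SpanRate g (K : Set X) ε

/-- The entropy function `h_top(x)` of the semigroup action. -/
def entropyFn (g : Fin p → X → X) (x : X) : EReal :=
  ⨆ ε : {ε : ℝ // 0 < ε}, hdEps g x (ε : ℝ)

/-- `h_{D}(y, ε)` for a single map. -/
def mapHdEps (F : Y → Y) (y : Y) (ε : ℝ) : EReal :=
  ⨅ C : {C : Set Y // C ∈ nhds y ∧ IsCompact C}, mapSpanRate F (C : Set Y) ε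

/-- The entropy function of a single map. -/
def mapEntropyFn (F : Y → Y) (y : Y) : EReal :=
  ⨆ ε : {ε : ℝ // 0 < ε}, mapHdEps F y (ε : ℝ)

/-- The step skew-product `F_G(ω, x) = (σω, g_{ω₀}(x))` on `(ℕ → Fin p) × X`. -/
def skewProduct (g : Fin p → X → X) : ((ℕ → Fin p) × X) → ((ℕ → Fin p) × X) :=
  fun q => (fun n => q.1 (n + 1), g (q.1 0) q.2)

/-- The cylinder `[w₁ … w_ℓ]` in `Σ_p⁺ = ℕ → Fin p`. -/
def cylinder {ℓ : ℕ} (w : Fin ℓ → Fin p) : Set (ℕ → Fin p) :=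
  {ω | ∀ i : Fin ℓ, ω (i : ℕ) = w i}

attribute [local instance] PiNat.metricSpace

section Aux

lemma dynDist_self (w : List (X → X)) (x : X) : dynDist w x x = 0 := by
  induction w generalizing x with
  | nil => simp [dynDist]
  | cons f w ih => simp [dynDist, ih]

lemma dynDist_continuous (w : List (X → X)) (hw : ∀ f ∈ w, Continuous f) (y : X) :
    Continuous fun x => dynDist w x y := by
  induction w generalizing y with
  | nil => exact continuous_id.dist continuous_const
  | cons f w ih =>
      show Continuous fun x => max (dist x y) (dynDist w (f x) (f y))
      exact (continuous_id.dist continuous_const).max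
        (((ih (fun h hh => hw h (List.mem_cons_of_mem _ hh)) (f y))).comp
          (hw f List.mem_cons_self))

/-- For compact `K` and continuous maps, finite spanning sets exist. -/
lemma exists_dynSpanning (K : Set X) (hK : IsCompact K) (w : List (X → X))
    (hw : ∀ f ∈ w, Continuous f) {ε : ℝ} (hε : 0 < ε) :
    ∃ F : Finset X, ↑F ⊆ K ∧ IsDynSpanning w ε K ↑F := by
  obtain ⟨t, htK, hfin, hcov⟩ := hK.elim_finite_subcover_image
    (c := fun y => {x | dynDist w x y < ε})
    (fun y _ => isOpen_lt (dynDist_continuous w hw y) continuous_const)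
    (fun x hx => Set.mem_biUnion hx (by simp [dynDist_self, hε]))
  refine ⟨hfin.toFinset, by simpa using htK, fun x hx => ?_⟩
  obtain ⟨y, hy, hxy⟩ := Set.mem_iUnion₂.1 (hcov hx)
  exact ⟨y, by simpa using hy, hxy⟩

lemma spanSet_nonempty (K : Set X) (hK : IsCompact K) (w : List (X → X))
    (hw : ∀ f ∈ w, Continuous f) {ε : ℝ} (hε : 0 < ε) :
    {n | ∃ F : Finset X, ↑F ⊆ K ∧ IsDynSpanning w ε K (↑F : Set X) ∧ F.card = n}.Nonempty := by
  obtain ⟨F, h1, h2⟩ := exists_dynSpanning K hK w hw hε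
  exact ⟨F.card, F, h1, h2, rfl⟩

lemma spanCard_antitone {K : Set X} (hK : IsCompact K) {w : List (X → X)}
    (hw : ∀ f ∈ w, Continuous f) {ε ε' : ℝ} (hε : 0 < ε) (h : ε ≤ ε') :
    spanCard K w ε' ≤ spanCard K w ε := by
  obtain ⟨F, hFK, hsp, hcard⟩ := Nat.sInf_mem (spanSet_nonempty K hK w hw hε)
  have h1 : F.card ∈ {n | ∃ F : Finset X, ↑F ⊆ K ∧ IsDynSpanning w ε' K (↑F : Set X) ∧
      F.card = n} :=
    ⟨F, hFK, fun x hx => by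
      obtain ⟨y, hy, hd⟩ := hsp x hx; exact ⟨y, hy, hd.trans_le h⟩, rfl⟩
  calc spanCard K w ε' ≤ F.card := Nat.sInf_le h1
    _ = spanCard K w ε := hcard

lemma one_le_spanCard {K : Set X} (hKne : K.Nonempty) (hK : IsCompact K) {w : List (X → X)}
    (hw : ∀ f ∈ w, Continuous f) {ε : ℝ} (hε : 0 < ε) : 1 ≤ spanCard K w ε := by
  obtain ⟨F, hFK, hsp, hcard⟩ := Nat.sInf_mem (spanSet_nonempty K hK w hw hε)
  obtain ⟨x, hx⟩ := hKne
  obtain ⟨y, hy, -⟩ := hsp x hx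
  unfold spanCard
  rw [← hcard]
  exact Finset.card_pos.2 ⟨y, by exact_mod_cast hy⟩

variable {p : ℕ} [NeZero p]

lemma one_le_spanSum {g : Fin p → X → X} (hg : ∀ i, Continuous (g i)) {K : Set X}
    (hKne : K.Nonempty) (hK : IsCompact K) (n : ℕ) {ε : ℝ} (hε : 0 < ε) :
    1 ≤ SpanSum g K n ε := by
  have hp0 : (0 : ℝ) < (p : ℝ) := by exact_mod_cast Nat.pos_of_ne_zero (NeZero.ne p)
  have hp : (0 : ℝ) < (p : ℝ) ^ n := pow_pos hp0 n
  have hw : ∀ u : Fin n → Fin p, ∀ f ∈ (List.ofFn u).map g, Continuous f := by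
    intro u f hf
    obtain ⟨i, -, rfl⟩ := List.mem_map.1 hf
    exact hg i
  have hsum : ((p : ℝ) ^ n) ≤ ∑ u : Fin n → Fin p, (spanCard K ((List.ofFn u).map g) ε : ℝ) := by
    calc ((p : ℝ) ^ n) = ∑ _u : Fin n → Fin p, (1 : ℝ) := by
          simp [Finset.card_univ, Fintype.card_fun]
      _ ≤ _ := Finset.sum_le_sum fun u _ => by
          exact_mod_cast one_le_spanCard hKne hK (hw u) hε
  rw [SpanSum, one_div, ← div_eq_inv_mul, le_div_iff₀ hp, one_mul]
  exact hsum

lemma spanSum_antitone {g : Fin p → X → X} (hg : ∀ i, Continuous (g i)) {K : Set X}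
    (hK : IsCompact K) (n : ℕ) {ε ε' : ℝ} (hε : 0 < ε) (h : ε ≤ ε') :
    SpanSum g K n ε' ≤ SpanSum g K n ε := by
  have hw : ∀ u : Fin n → Fin p, ∀ f ∈ (List.ofFn u).map g, Continuous f := by
    intro u f hf
    obtain ⟨i, -, rfl⟩ := List.mem_map.1 hf
    exact hg i
  have hp : (0 : ℝ) ≤ 1 / (p : ℝ) ^ n := by positivity
  exact mul_le_mul_of_nonneg_left (Finset.sum_le_sum fun u _ => by
    exact_mod_cast spanCard_antitone hK (hw u) hε h) hp

lemma spanRate_antitone {g : Fin p → X → X} (hg : ∀ i, Continuous (g i)) {K : Set X}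
    (hKne : K.Nonempty) (hK : IsCompact K) {ε ε' : ℝ} (hε : 0 < ε) (h : ε ≤ ε') :
    SpanRate g K ε' ≤ SpanRate g K ε := by
  refine Filter.limsup_le_limsup (Filter.Eventually.of_forall fun n => ?_)
  have h1 : 1 ≤ SpanSum g K n ε' := one_le_spanSum hg hKne hK n (hε.trans_le h)
  have h2 : SpanSum g K n ε' ≤ SpanSum g K n ε := spanSum_antitone hg hK n hε h
  have hlog : Real.log (SpanSum g K n ε') ≤ Real.log (SpanSum g K n ε) :=
    Real.log_le_log (by linarith) h2
  have hdiv : Real.log (SpanSum g K n ε') / n ≤ Real.log (SpanSum g K n ε) / n := by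
    rw [div_eq_mul_inv, div_eq_mul_inv]
    exact mul_le_mul_of_nonneg_right hlog (by positivity)
  show ((Real.log (SpanSum g K n ε') / n : ℝ) : EReal)
      ≤ ((Real.log (SpanSum g K n ε) / n : ℝ) : EReal)
  exact_mod_cast hdiv

lemma hdEps_antitone {g : Fin p → X → X} (hg : ∀ i, Continuous (g i)) (x : X)
    {ε ε' : ℝ} (hε : 0 < ε) (h : ε ≤ ε') : hdEps g x ε' ≤ hdEps g x ε := by
  refine iInf_mono fun K => ?_
  exact spanRate_antitone hg ⟨x, mem_of_mem_nhds K.2.1⟩ K.2.2 hε h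

lemma hdEps_usc (g : Fin p → X → X) (ε : ℝ) :
    UpperSemicontinuous fun x : X => hdEps g x ε := by
  intro x c hc
  obtain ⟨⟨K, hKnhds, hKcomp⟩, hKlt⟩ := iInf_lt_iff.1 hc
  filter_upwards [interior_mem_nhds.2 hKnhds] with y hy
  refine lt_of_le_of_lt ?_ hKlt
  exact iInf_le_of_le ⟨K, mem_of_superset (isOpen_interior.mem_nhds hy) interior_subset,
    hKcomp⟩ le_rfl

end Aux


/-- for each `ε > 0` the function `x ↦ h_d(x, ε)` is upper semicontinuous, and
consequently the entropy function `x ↦ h_top(x)` is Borel measurable. -/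
theorem hdEps_upperSemicontinuous_and_entropyFn_measurable
    [CompactSpace X] [MeasurableSpace X] [BorelSpace X] {p : ℕ} [NeZero p]
    (g : Fin p → X → X) (hg : ∀ i, Continuous (g i)) :
    (∀ ε : ℝ, 0 < ε → UpperSemicontinuous fun x : X => hdEps g x ε) ∧
      Measurable fun x : X => entropyFn g x := by
  constructor
  · intro ε _
    exact hdEps_usc g ε
  · have key : (fun x : X => entropyFn g x)
        = fun x : X => ⨆ n : ℕ, hdEps g x (1 / (n + 1) : ℝ) := by
      funext x
      apply le_antisymm
      · refine iSup_le fun ε => ?_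
        obtain ⟨n, hn⟩ := exists_nat_one_div_lt ε.2
        exact le_trans (hdEps_antitone hg x (by positivity) hn.le) (le_iSup (fun n : ℕ => hdEps g x (1 / ((n : ℝ) + 1))) n)
      · refine iSup_le fun n => ?_
        exact le_iSup_of_le (⟨(1 / (n + 1) : ℝ), by positivity⟩ : {ε : ℝ // 0 < ε}) le_rfl
    rw [key]
    exact Measurable.iSup fun n => (hdEps_usc g _).measurable
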